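/- arXiv:2112.10032 — 2 statements merged into one kernel-verified Lean document; each statement's English description precedes it below -/
import Mathlib

section
/- Truncated discrete Laplace moment bounds: Fix τ ∈ ℕ and λ ∈ (0,1) with τ > ln(10)/ln(1/λ) - 1. Let DLap_τ(λ) be the distribution on {-τ,...,τ} with mass at v proportional to λ^{|v|}. Then E[η] = 0, E[η²] < 5/(1-λ)², and E[η⁴] < 60/(1-λ)⁴ for η ∼ DLap_τ(λ). -/
/-- Mass of the truncated discrete Laplace distribution `DLap_τ(λ)` at `v`:
`λ^{|v|} / (1 + 2∑_{j=1}^τ λ^j)` for `|v| ≤ τ`, and `0` otherwise. -/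
noncomputable def dlapTruncMass (lam : ℝ) (τ : ℕ) (v : ℤ) : ℝ :=
  if v.natAbs ≤ τ then lam ^ v.natAbs / (1 + 2 * ∑ j ∈ Finset.Icc 1 τ, lam ^ j) else 0

/-!
The mass is even in `v`, so odd moments vanish and the `p`-th moment (`p ≠ 0` even) equals
`2 ∑_{k=1}^τ k^p λ^k / D` with `D = 1 + 2 ∑_{j=1}^τ λ^j`. Telescoping gives
`(1-λ) D = 1 + λ - 2λ^{τ+1}` and the bounds `(1-λ)^3 ∑ k^2 λ^k ≤ λ(1+λ)`,
`(1-λ)^5 ∑ k^4 λ^k ≤ λ(1+11λ+11λ²+λ³)` (the Eulerian-number numerators of the full series).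
The hypothesis on `τ` says exactly `λ^{τ+1} < 1/10`, which keeps `(1-λ) D` away from `0`.
-/

open Finset

lemma Finset.sum_Icc_one_eq_sub_of_telescope {M : Type*} [AddCommGroup M] {f R : ℕ → M}
    (h : ∀ n, f (n + 1) = R n - R (n + 1)) (n : ℕ) :
    ∑ k ∈ Icc 1 n, f k = R 0 - R n := by
  induction n with
  | zero => simp
  | succ n ih => rw [sum_Icc_succ_top (by omega), ih, h]; abel

lemma Finset.sum_Icc_neg_natCast_eq_add_sum {M : Type*} [AddCommMonoid M] (g : ℤ → M) (n : ℕ) :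
    ∑ v ∈ Icc (-(n : ℤ)) n, g v = g 0 + ∑ k ∈ Icc 1 n, (g k + g (-k)) := by
  induction n with
  | zero => simp
  | succ n ih =>
    have hsplit : Icc (-((n + 1 : ℕ) : ℤ)) ((n + 1 : ℕ) : ℤ)
        = insert (-((n + 1 : ℕ) : ℤ)) (insert ((n + 1 : ℕ) : ℤ) (Icc (-(n : ℤ)) n)) := by
      ext v; simp only [mem_Icc, mem_insert]; omega
    rw [hsplit, sum_insert (by simp only [mem_insert, mem_Icc]; omega),
      sum_insert (by simp only [mem_Icc]; omega), ih, sum_Icc_succ_top (by omega)]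
    push_cast
    abel

lemma one_sub_mul_sum_Icc_one_pow (x : ℝ) (n : ℕ) :
    (1 - x) * ∑ k ∈ Icc 1 n, x ^ k = x - x ^ (n + 1) := by
  rw [mul_sum, sum_Icc_one_eq_sub_of_telescope (R := fun n => x ^ (n + 1)) (fun n => by ring)]
  ring

lemma one_sub_pow_three_mul_sum_sq_mul_pow_le {x : ℝ} (hx₀ : 0 ≤ x) (hx₁ : x ≤ 1) (n : ℕ) :
    (1 - x) ^ 3 * ∑ k ∈ Icc 1 n, (k : ℝ) ^ 2 * x ^ k ≤ x * (1 + x) := by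
  -- `R n = (1 - x) ^ 3 * ∑ k > n, k ^ 2 * x ^ k` when `x < 1`
  set R : ℕ → ℝ := fun n =>
    x ^ (n + 1) * (((n : ℝ) + 1) ^ 2 * (1 - x) ^ 2 + (2 * n + 3) * x * (1 - x) + 2 * x ^ 2)
  have hR : 0 ≤ R n := by
    have : 0 ≤ 1 - x := by linarith
    positivity
  have hR₀ : R 0 = x * (1 + x) := by simp only [R]; push_cast; ring
  have hstep (m : ℕ) : (1 - x) ^ 3 * (((m + 1 : ℕ) : ℝ) ^ 2 * x ^ (m + 1)) = R m - R (m + 1) := by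
    simp only [R]; push_cast; ring
  rw [mul_sum, sum_Icc_one_eq_sub_of_telescope hstep, hR₀]
  linarith

lemma one_sub_pow_five_mul_sum_pow_four_mul_pow_le {x : ℝ} (hx₀ : 0 ≤ x) (hx₁ : x ≤ 1)
    (n : ℕ) :
    (1 - x) ^ 5 * ∑ k ∈ Icc 1 n, (k : ℝ) ^ 4 * x ^ k
      ≤ x * (1 + 11 * x + 11 * x ^ 2 + x ^ 3) := by
  set R : ℕ → ℝ := fun n => x ^ (n + 1) * ((n + 1 : ℝ) ^ 4 * (1 - x) ^ 4
    + (4 * (n + 1 : ℝ) ^ 3 + 6 * (n + 1) ^ 2 + 4 * (n + 1) + 1) * x * (1 - x) ^ 3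
    + (12 * (n + 1 : ℝ) ^ 2 + 24 * (n + 1) + 14) * x ^ 2 * (1 - x) ^ 2
    + (24 * (n + 1 : ℝ) + 36) * x ^ 3 * (1 - x) + 24 * x ^ 4)
  have hR : 0 ≤ R n := by
    have : 0 ≤ 1 - x := by linarith
    positivity
  have hR₀ : R 0 = x * (1 + 11 * x + 11 * x ^ 2 + x ^ 3) := by simp only [R]; push_cast; ring
  have hstep (m : ℕ) : (1 - x) ^ 5 * (((m + 1 : ℕ) : ℝ) ^ 4 * x ^ (m + 1)) = R m - R (m + 1) := by
    simp only [R]; push_cast; ring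
  rw [mul_sum, sum_Icc_one_eq_sub_of_telescope hstep, hR₀]
  linarith

lemma div_lt_div_pow_of_pow_succ_mul_le {y D S B c : ℝ} (p : ℕ) (hy : 0 < y) (hD : 0 < D)
    (hS : y ^ (p + 1) * S ≤ B) (hB : B < c * (y * D)) :
    S / D < c / y ^ p := by
  rw [div_lt_div_iff₀ hD (by positivity)]
  have : y * (S * y ^ p) < y * (c * D) := by rw [pow_succ] at hS; nlinarith
  exact lt_of_mul_lt_mul_left this hy.le

lemma pow_succ_lt_one_tenth {lam : ℝ} (h0 : 0 < lam) (h1 : lam < 1) {τ : ℕ}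
    (hτ : (τ : ℝ) > Real.log 10 / Real.log (1 / lam) - 1) :
    lam ^ (τ + 1) < 1 / 10 := by
  have hL : 0 < Real.log (1 / lam) := Real.log_pos (by rw [lt_div_iff₀ h0]; linarith)
  have hlog : Real.log 10 < Real.log ((1 / lam) ^ (τ + 1)) := by
    rw [Real.log_pow, ← div_lt_iff₀ hL]; push_cast; linarith
  have h10 : (10 : ℝ) < (1 / lam) ^ (τ + 1) :=
    (Real.log_lt_log_iff (by norm_num) (by positivity)).mp hlog
  rw [one_div_pow] at h10
  rwa [lt_one_div (by positivity) (by norm_num)]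

section dlapTruncMass

variable (lam : ℝ) (τ : ℕ)

lemma dlapTruncMass_neg (v : ℤ) : dlapTruncMass lam τ (-v) = dlapTruncMass lam τ v := by
  simp only [dlapTruncMass, Int.natAbs_neg]

lemma sum_Icc_mul_dlapTruncMass_eq_zero :
    ∑ v ∈ Icc (-(τ : ℤ)) τ, (v : ℝ) * dlapTruncMass lam τ v = 0 := by
  rw [sum_Icc_neg_natCast_eq_add_sum]
  simp [dlapTruncMass_neg]

lemma sum_Icc_pow_mul_dlapTruncMass_of_even {p : ℕ} (hp : p ≠ 0) (hpe : Even p) :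
    ∑ v ∈ Icc (-(τ : ℤ)) τ, (v : ℝ) ^ p * dlapTruncMass lam τ v
      = (2 * ∑ k ∈ Icc 1 τ, (k : ℝ) ^ p * lam ^ k) / (1 + 2 * ∑ j ∈ Icc 1 τ, lam ^ j) := by
  rw [sum_Icc_neg_natCast_eq_add_sum, mul_sum, sum_div]
  simp only [Int.cast_zero, zero_pow hp, zero_mul, zero_add, dlapTruncMass_neg]
  refine sum_congr rfl fun k hk => ?_
  simp only [dlapTruncMass, Int.natAbs_natCast, (mem_Icc.mp hk).2, if_true, Int.cast_neg,
    Int.cast_natCast, hpe.neg_pow]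
  ring

lemma one_sub_mul_dlapTruncNormalizer :
    (1 - lam) * (1 + 2 * ∑ j ∈ Icc 1 τ, lam ^ j) = 1 + lam - 2 * lam ^ (τ + 1) := by
  rw [mul_add, mul_left_comm, one_sub_mul_sum_Icc_one_pow]
  ring

end dlapTruncMass

/-- moment bounds for the truncated discrete Laplace distribution.
If `τ > ln 10 / ln (1/λ) - 1` then `E[η] = 0`, `E[η²] < 5/(1-λ)²`, and
`E[η⁴] < 60/(1-λ)⁴` for `η ∼ DLap_τ(λ)`. -/
theorem stmt5 (τ : ℕ) (lam : ℝ) (h0 : 0 < lam) (h1 : lam < 1)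
    (hτ : (τ : ℝ) > Real.log 10 / Real.log (1 / lam) - 1) :
    (∑ v ∈ Finset.Icc (-(τ : ℤ)) (τ : ℤ), (v : ℝ) * dlapTruncMass lam τ v) = 0 ∧
    (∑ v ∈ Finset.Icc (-(τ : ℤ)) (τ : ℤ), (v : ℝ) ^ 2 * dlapTruncMass lam τ v)
      < 5 / (1 - lam) ^ 2 ∧
    (∑ v ∈ Finset.Icc (-(τ : ℤ)) (τ : ℤ), (v : ℝ) ^ 4 * dlapTruncMass lam τ v)
      < 60 / (1 - lam) ^ 4 := by
  have htail := pow_succ_lt_one_tenth h0 h1 hτ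
  have hnorm := one_sub_mul_dlapTruncNormalizer lam τ
  have hD : 0 < 1 + 2 * ∑ j ∈ Icc 1 τ, lam ^ j := by positivity
  refine ⟨sum_Icc_mul_dlapTruncMass_eq_zero lam τ, ?_, ?_⟩
  · rw [sum_Icc_pow_mul_dlapTruncMass_of_even lam τ two_ne_zero even_two]
    refine div_lt_div_pow_of_pow_succ_mul_le 2 (by linarith) hD
      (B := 2 * (lam * (1 + lam))) ?_ ?_
    · rw [mul_left_comm]
      exact mul_le_mul_of_nonneg_left (one_sub_pow_three_mul_sum_sq_mul_pow_le h0.le h1.le τ)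
        zero_le_two
    · rw [hnorm]; nlinarith
  · rw [sum_Icc_pow_mul_dlapTruncMass_of_even lam τ four_ne_zero (by decide)]
    refine div_lt_div_pow_of_pow_succ_mul_le 4 (by linarith) hD
      (B := 2 * (lam * (1 + 11 * lam + 11 * lam ^ 2 + lam ^ 3))) ?_ ?_
    · rw [mul_left_comm]
      exact mul_le_mul_of_nonneg_left
        (one_sub_pow_five_mul_sum_pow_four_mul_pow_le h0.le h1.le τ) zero_le_two
    · rw [hnorm]
      have : lam ^ 2 < 1 := by nlinarith
      have : lam ^ 3 < 1 := by nlinarith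
      nlinarith
end

section
/- Infinite divisibility of the discrete Laplace distribution: For any n ∈ ℕ and ρ ∈ (0,1), if η⁺_1,...,η⁺_n, η⁻_1,...,η⁻_n are 2n independent samples from the Pólya (negative binomial) distribution with parameters (1/n, ρ), then ∑_{i=1}^n (η⁺_i - η⁻_i) is distributed as DLap(ρ), the discrete Laplace distribution on ℤ with mass at v proportional to ρ^{|v|}. -/
/-!
Pólya laws form a convolution semigroup in the shape parameter,
`Polya(r, ρ) ⋆ Polya(s, ρ) = Polya(r + s, ρ)`, because their coefficients `multichoose r k` satisfy
the Chu–Vandermonde identity. Hence the `n`-fold convolution of the law of `η⁺ - η⁻` with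
`r = 1/n` is the law of the difference of two independent `Polya(1, ρ)`, i.e. geometric, variables,
and summing a geometric series gives `(1 - ρ)/(1 + ρ) · ρ^|v|`.

Mass functions are handled as `ℝ≥0∞`-valued functions on `ℤ`, for which Fubini and reindexing of
sums hold unconditionally; since all total masses are finite, taking real parts recovers `nfold`.
-/

/-- Mass function of the Pólya (negative binomial) distribution with
parameters `(r, ρ)`: `P[X = k] = C(k+r-1, k) ρ^k (1-ρ)^r`, where the
generalized binomial coefficient is `∏_{i=0}^{k-1} (r+i)/(i+1)`. -/
noncomputable def polyaMass (r ρ : ℝ) (k : ℕ) : ℝ :=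
  (∏ i ∈ Finset.range k, (r + i) / (i + 1)) * ρ ^ k * Real.rpow (1 - ρ) r

/-- Mass function of the difference `η⁺ - η⁻` of two independent
`Polya(r, ρ)` samples. -/
noncomputable def polyaDiffMass (r ρ : ℝ) (v : ℤ) : ℝ :=
  ∑' k : ℕ, polyaMass r ρ k *
    (if 0 ≤ (k : ℤ) - v then polyaMass r ρ ((k : ℤ) - v).toNat else 0)

/-- `n`-fold convolution of a mass function on `ℤ` (the mass function of the
sum of `n` i.i.d. copies). -/
noncomputable def nfold (A : ℤ → ℝ) : ℕ → ℤ → ℝ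
  | 0 => fun v => if v = 0 then 1 else 0
  | n + 1 => fun v => ∑' w : ℤ, A w * nfold A n (v - w)

open Finset Polynomial
open scoped ENNReal

theorem Ring.multichoose_add {R : Type*} [CommRing R] [BinomialRing R] (r s : R) (k : ℕ) :
    Ring.multichoose (r + s) k =
      ∑ ij ∈ antidiagonal k, Ring.multichoose r ij.1 * Ring.multichoose s ij.2 := by
  have h := Ring.add_choose_eq (r := -r) (s := -s) k (Commute.all _ _)
  rw [← neg_add, Ring.choose_neg'] at h
  simp_rw [Ring.choose_neg', smul_mul_smul_comm, ← Int.negOnePow_add] at h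
  rw [Finset.sum_congr rfl fun ij hij => by
    rw [← Nat.cast_add, (mem_antidiagonal.mp hij)], ← smul_sum] at h
  exact smul_left_cancel _ h

theorem ascPochhammer_eval_eq_prod_range {R : Type*} [CommSemiring R] (n : ℕ) (r : R) :
    (ascPochhammer R n).eval r = ∏ j ∈ range n, (r + j) := by
  induction n with
  | zero => simp
  | succ n ih => rw [ascPochhammer_succ_eval, ih, prod_range_succ]

theorem prod_range_div_eq_multichoose (r : ℝ) (k : ℕ) :
    ∏ i ∈ range k, (r + i) / (i + 1) = Ring.multichoose r k := by
  have h := Ring.factorial_nsmul_multichoose_eq_ascPochhammer r k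
  rw [nsmul_eq_mul, ascPochhammer_smeval_eq_eval, ascPochhammer_eval_eq_prod_range,
    ← prod_range_add_one_eq_factorial] at h
  rw [eq_div_of_mul_eq (by positivity) ((mul_comm _ _).trans h), prod_div_distrib]
  push_cast
  rfl

section PolyaMass

variable {r s ρ : ℝ}

theorem polyaMass_eq_multichoose (r ρ : ℝ) (k : ℕ) :
    polyaMass r ρ k = Ring.multichoose r k * ρ ^ k * (1 - ρ) ^ r := by
  rw [polyaMass, prod_range_div_eq_multichoose, Real.rpow_eq_pow]

theorem polyaMass_nonneg (hr : 0 ≤ r) (hρ : 0 ≤ ρ) (hρ1 : ρ ≤ 1) (k : ℕ) :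
    0 ≤ polyaMass r ρ k := by
  have : 0 ≤ (1 - ρ) ^ r := Real.rpow_nonneg (by linarith) r
  unfold polyaMass
  positivity

theorem polyaMass_le_pow (hr : 0 ≤ r) (hr1 : r ≤ 1) (hρ : 0 ≤ ρ) (hρ1 : ρ ≤ 1) (k : ℕ) :
    polyaMass r ρ k ≤ ρ ^ k := by
  have hcoeff : ∏ i ∈ range k, (r + i) / (i + 1) ≤ 1 :=
    prod_le_one (fun (i : ℕ) _ => by positivity) fun (i : ℕ) _ =>
      (div_le_one (by positivity)).mpr (by linarith)
  have hpow : (1 - ρ) ^ r ≤ 1 := Real.rpow_le_one (by linarith) (by linarith) hr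
  have hpow0 : 0 ≤ (1 - ρ) ^ r := Real.rpow_nonneg (by linarith) r
  rw [polyaMass, Real.rpow_eq_pow]
  calc _ ≤ 1 * ρ ^ k * 1 := by gcongr
    _ = ρ ^ k := by ring

theorem polyaMass_one (ρ : ℝ) (k : ℕ) : polyaMass 1 ρ k = (1 - ρ) * ρ ^ k := by
  rw [polyaMass_eq_multichoose, Ring.multichoose_one, Real.rpow_one]
  ring

theorem sum_antidiagonal_polyaMass (hρ1 : ρ < 1) (k : ℕ) :
    ∑ ij ∈ antidiagonal k, polyaMass r ρ ij.1 * polyaMass s ρ ij.2 = polyaMass (r + s) ρ k := by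
  simp only [polyaMass_eq_multichoose, Ring.multichoose_add, sum_mul]
  refine sum_congr rfl fun ij hij => ?_
  rw [← mem_antidiagonal.mp hij, pow_add, Real.rpow_add (by linarith)]
  ring

end PolyaMass

section IntConv

variable (A B C D : ℤ → ℝ≥0∞)

noncomputable def intConv (v : ℤ) : ℝ≥0∞ := ∑' w : ℤ, A w * B (v - w)

noncomputable def intConvPow : ℕ → ℤ → ℝ≥0∞
  | 0 => fun v => if v = 0 then 1 else 0
  | n + 1 => intConv A (intConvPow n)

theorem intConv_comm : intConv A B = intConv B A := by
  funext v
  rw [intConv, intConv, ← (Equiv.subLeft v).tsum_eq]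
  simp only [Equiv.subLeft_apply, sub_sub_cancel, mul_comm]

theorem intConv_assoc : intConv (intConv A B) C = intConv A (intConv B C) := by
  funext v
  simp only [intConv, ← ENNReal.tsum_mul_right, ← ENNReal.tsum_mul_left, mul_assoc]
  rw [ENNReal.tsum_comm]
  refine tsum_congr fun u => ?_
  rw [← (Equiv.addRight u).tsum_eq]
  simp only [Equiv.coe_addRight, add_sub_cancel_right, sub_add_eq_sub_sub_swap]

theorem intConv_intConv_intConv_comm :
    intConv (intConv A B) (intConv C D) = intConv (intConv A C) (intConv B D) := by
  rw [intConv_assoc, ← intConv_assoc B, intConv_comm B C, intConv_assoc C, ← intConv_assoc A]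

theorem intConv_comp_neg (v : ℤ) :
    intConv (fun w => A (-w)) (fun w => B (-w)) v = intConv A B (-v) := by
  rw [intConv, intConv, ← (Equiv.neg ℤ).tsum_eq]
  simp only [Equiv.neg_apply, neg_neg, neg_add, sub_eq_neg_add]

theorem tsum_intConv : ∑' v, intConv A B v = (∑' v, A v) * ∑' v, B v := by
  simp only [intConv]
  rw [ENNReal.tsum_comm, ← ENNReal.tsum_mul_right]
  refine tsum_congr fun w => ?_
  rw [ENNReal.tsum_mul_left, ← (Equiv.subRight w).tsum_eq B]
  rfl

theorem intConvPow_one : intConvPow A 1 = A := by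
  funext v
  simp only [intConvPow, intConv, mul_ite, mul_one, mul_zero, sub_eq_zero, @eq_comm _ v]
  exact tsum_ite_eq v A

theorem tsum_intConvPow (n : ℕ) : ∑' v, intConvPow A n v = (∑' v, A v) ^ n := by
  induction n with
  | zero => simp [intConvPow]
  | succ n ih => rw [intConvPow, tsum_intConv, ih, pow_succ, mul_comm]

end IntConv

section NatExtend

variable (f g : ℕ → ℝ≥0∞)

noncomputable def natExtend (v : ℤ) : ℝ≥0∞ := if 0 ≤ v then f v.toNat else 0

@[simp]
theorem natExtend_natCast (k : ℕ) : natExtend f k = f k := by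
  simp [natExtend]

theorem natExtend_of_neg {v : ℤ} (hv : v < 0) : natExtend f v = 0 := by
  simp [natExtend, hv.not_ge]

theorem tsum_int_eq_tsum_nat_of_neg {F : ℤ → ℝ≥0∞} (hF : ∀ v < 0, F v = 0) :
    ∑' v, F v = ∑' k : ℕ, F k := by
  refine (Nat.cast_injective.tsum_eq fun v hv => ?_).symm
  exact ⟨v.toNat, Int.toNat_of_nonneg (not_lt.mp fun h => hv (hF v h))⟩

theorem tsum_natExtend : ∑' v, natExtend f v = ∑' k, f k := by
  rw [tsum_int_eq_tsum_nat_of_neg fun v => natExtend_of_neg f]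
  simp

theorem intConv_natExtend :
    intConv (natExtend f) (natExtend g) =
      natExtend fun k => ∑ ij ∈ antidiagonal k, f ij.1 * g ij.2 := by
  funext v
  rcases lt_or_ge v 0 with hv | hv
  · rw [natExtend_of_neg _ hv, intConv, ENNReal.tsum_eq_zero]
    intro w
    rcases lt_or_ge w 0 with hw | hw
    · rw [natExtend_of_neg f hw, zero_mul]
    · rw [natExtend_of_neg g (by omega), mul_zero]
  · obtain ⟨k, rfl⟩ := Int.eq_ofNat_of_zero_le hv
    rw [intConv, tsum_int_eq_tsum_nat_of_neg fun w hw => by rw [natExtend_of_neg f hw, zero_mul],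
      tsum_eq_sum (s := range (k + 1)) fun i hi => ?_, natExtend_natCast,
      Nat.sum_antidiagonal_eq_sum_range_succ_mk]
    · refine sum_congr rfl fun i hi => ?_
      rw [← Nat.cast_sub (mem_range_succ_iff.mp hi), natExtend_natCast, natExtend_natCast]
    · rw [natExtend_of_neg g (by simp at hi; omega), mul_zero]

end NatExtend

theorem nfold_toReal (A : ℤ → ℝ≥0∞) (hA : ∑' v, A v ≠ ∞) (n : ℕ) (v : ℤ) :
    nfold (fun w => (A w).toReal) n v = (intConvPow A n v).toReal := by
  induction n generalizing v with
  | zero => by_cases hv : v = 0 <;> simp [nfold, intConvPow, hv]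
  | succ n ih =>
    have hfin : ∀ w, A w * intConvPow A n (v - w) ≠ ∞ := fun w =>
      ENNReal.mul_ne_top (ne_top_of_le_ne_top hA (ENNReal.le_tsum w))
        (ne_top_of_le_ne_top (tsum_intConvPow A n ▸ ENNReal.pow_ne_top hA) (ENNReal.le_tsum _))
    simp only [nfold, ih, intConvPow, intConv, ENNReal.tsum_toReal_eq hfin, ENNReal.toReal_mul]

section Polya

variable {r s ρ : ℝ}

noncomputable def polyaENN (r ρ : ℝ) : ℤ → ℝ≥0∞ :=
  natExtend fun k => ENNReal.ofReal (polyaMass r ρ k)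

noncomputable def polyaDiffENN (r ρ : ℝ) : ℤ → ℝ≥0∞ :=
  intConv (polyaENN r ρ) fun v => polyaENN r ρ (-v)

theorem intConv_polyaENN (hr : 0 ≤ r) (hs : 0 ≤ s) (hρ : 0 ≤ ρ) (hρ1 : ρ < 1) :
    intConv (polyaENN r ρ) (polyaENN s ρ) = polyaENN (r + s) ρ := by
  rw [polyaENN, polyaENN, intConv_natExtend, polyaENN]
  congr 1
  funext k
  rw [← sum_antidiagonal_polyaMass hρ1, ENNReal.ofReal_sum_of_nonneg fun ij _ =>
    mul_nonneg (polyaMass_nonneg hr hρ hρ1.le _) (polyaMass_nonneg hs hρ hρ1.le _)]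
  exact sum_congr rfl fun ij _ => (ENNReal.ofReal_mul (polyaMass_nonneg hr hρ hρ1.le _)).symm

theorem polyaDiffENN_add (hr : 0 ≤ r) (hs : 0 ≤ s) (hρ : 0 ≤ ρ) (hρ1 : ρ < 1) :
    intConv (polyaDiffENN r ρ) (polyaDiffENN s ρ) = polyaDiffENN (r + s) ρ := by
  rw [polyaDiffENN, polyaDiffENN, intConv_intConv_intConv_comm, polyaDiffENN,
    intConv_polyaENN hr hs hρ hρ1]
  congr 1
  funext v
  rw [intConv_comp_neg, intConv_polyaENN hr hs hρ hρ1]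

theorem intConvPow_polyaDiffENN (hr : 0 ≤ r) (hρ : 0 ≤ ρ) (hρ1 : ρ < 1) {n : ℕ} (hn : 1 ≤ n) :
    intConvPow (polyaDiffENN r ρ) n = polyaDiffENN (n * r) ρ := by
  induction n, hn using Nat.le_induction with
  | base => rw [intConvPow_one, Nat.cast_one, one_mul]
  | succ n hn ih =>
    rw [intConvPow, ih, polyaDiffENN_add hr (by positivity) hρ hρ1]
    push_cast
    ring_nf

theorem tsum_polyaENN_ne_top (hr : 0 ≤ r) (hr1 : r ≤ 1) (hρ : 0 ≤ ρ) (hρ1 : ρ < 1) :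
    ∑' v, polyaENN r ρ v ≠ ∞ := by
  rw [polyaENN, tsum_natExtend]
  refine ne_top_of_le_ne_top ?_ (ENNReal.tsum_le_tsum fun k =>
    ENNReal.ofReal_le_ofReal (polyaMass_le_pow hr hr1 hρ hρ1.le k))
  rw [← ENNReal.ofReal_tsum_of_nonneg (fun k => by positivity)
    (summable_geometric_of_lt_one hρ hρ1)]
  exact ENNReal.ofReal_ne_top

theorem tsum_polyaDiffENN_ne_top (hr : 0 ≤ r) (hr1 : r ≤ 1) (hρ : 0 ≤ ρ) (hρ1 : ρ < 1) :
    ∑' v, polyaDiffENN r ρ v ≠ ∞ := by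
  rw [polyaDiffENN, tsum_intConv, show ∑' v, polyaENN r ρ (-v) = ∑' v, polyaENN r ρ v from
    (Equiv.neg ℤ).tsum_eq _]
  exact ENNReal.mul_ne_top (tsum_polyaENN_ne_top hr hr1 hρ hρ1) (tsum_polyaENN_ne_top hr hr1 hρ hρ1)

theorem polyaDiffMass_eq_toReal (hr : 0 ≤ r) (hρ : 0 ≤ ρ) (hρ1 : ρ ≤ 1) (v : ℤ) :
    polyaDiffMass r ρ v = (polyaDiffENN r ρ v).toReal := by
  have hmass := polyaMass_nonneg hr hρ hρ1
  rw [polyaDiffENN, intConv, tsum_int_eq_tsum_nat_of_neg fun w hw => by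
    rw [polyaENN, natExtend_of_neg _ hw, zero_mul]]
  rw [ENNReal.tsum_toReal_eq fun k => by
    simp only [polyaENN, natExtend]
    split_ifs <;> simp [ENNReal.mul_eq_top]]
  refine tsum_congr fun k => ?_
  simp only [polyaENN, natExtend, neg_sub, Nat.cast_nonneg, if_true, Int.toNat_natCast]
  split_ifs <;> simp [ENNReal.toReal_ofReal (hmass _)]

theorem polyaDiffENN_neg (r ρ : ℝ) (v : ℤ) : polyaDiffENN r ρ (-v) = polyaDiffENN r ρ v := by
  rw [polyaDiffENN, ← intConv_comp_neg, intConv_comm]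
  simp only [neg_neg]

theorem polyaDiffENN_one (hρ : 0 ≤ ρ) (hρ1 : ρ < 1) (v : ℤ) :
    polyaDiffENN 1 ρ v = ENNReal.ofReal ((1 - ρ) / (1 + ρ) * ρ ^ v.natAbs) := by
  wlog hv : 0 ≤ v generalizing v
  · rw [← polyaDiffENN_neg, this (-v) (by omega), Int.natAbs_neg]
  obtain ⟨k, rfl⟩ := Int.eq_ofNat_of_zero_le hv
  have hρ2 : ρ ^ 2 < 1 := by nlinarith
  have hterm (j : ℕ) : polyaENN 1 ρ (k + j) * polyaENN 1 ρ j =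
      ENNReal.ofReal ((1 - ρ) ^ 2 * ρ ^ k * (ρ ^ 2) ^ j) := by
    rw [polyaENN, ← Nat.cast_add, natExtend_natCast, natExtend_natCast, polyaMass_one,
      polyaMass_one, ← ENNReal.ofReal_mul (by positivity)]
    ring_nf
  calc polyaDiffENN 1 ρ k = ∑' j : ℤ, polyaENN 1 ρ (k + j) * polyaENN 1 ρ j := by
        rw [polyaDiffENN, intConv, ← (Equiv.addLeft (k : ℤ)).tsum_eq]
        simp only [Equiv.coe_addLeft, sub_add_cancel_left, neg_neg]
    _ = ∑' j : ℕ, ENNReal.ofReal ((1 - ρ) ^ 2 * ρ ^ k * (ρ ^ 2) ^ j) := by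
        rw [tsum_int_eq_tsum_nat_of_neg fun j hj => by
          rw [polyaENN, natExtend_of_neg _ hj, mul_zero]]
        exact tsum_congr hterm
    _ = ENNReal.ofReal ((1 - ρ) / (1 + ρ) * ρ ^ (k : ℤ).natAbs) := by
        rw [← ENNReal.ofReal_tsum_of_nonneg (fun j => by positivity)
          ((summable_geometric_of_lt_one (by positivity) hρ2).mul_left _), tsum_mul_left,
          tsum_geometric_of_lt_one (by positivity) hρ2, Int.natAbs_natCast]
        congr 1
        have : 1 + ρ ≠ 0 := by linarith
        have : 1 - ρ ^ 2 ≠ 0 := by linarith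
        field_simp
        ring

end Polya

/-- infinite divisibility of the discrete Laplace distribution.
The sum `∑_{i=1}^n (η⁺_i - η⁻_i)` of differences of `2n` independent
`Polya(1/n, ρ)` samples is distributed as `DLap(ρ)`. -/
theorem stmt11 (n : ℕ) (hn : 1 ≤ n) (ρ : ℝ) (h0 : 0 < ρ) (h1 : ρ < 1) :
    ∀ v : ℤ, nfold (polyaDiffMass (1 / n) ρ) n v
      = (1 - ρ) / (1 + ρ) * ρ ^ v.natAbs := by
  intro v
  have hr : (0 : ℝ) ≤ 1 / n := by positivity
  have hr1 : (1 : ℝ) / n ≤ 1 := div_le_one_of_le₀ (by exact_mod_cast hn) (by positivity)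
  have hn0 : (n : ℝ) ≠ 0 := by positivity
  rw [funext (polyaDiffMass_eq_toReal hr h0.le h1.le),
    nfold_toReal _ (tsum_polyaDiffENN_ne_top hr hr1 h0.le h1),
    intConvPow_polyaDiffENN hr h0.le h1 hn, mul_one_div_cancel hn0, polyaDiffENN_one h0.le h1,
    ENNReal.toReal_ofReal (by positivity)]
end
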